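/- The little-endian two's complement integer encoding functions are mutually inverse: (1) decoding the encoding of x yields x, and the encoding of x has length equal to the byte size times bits per byte, provided x is in the representable range of the integer type; (2) encoding the decoding of a bit list β of the right length yields β, and the decoded value is in the representable range. -/

import Mathlib

/-- The natural number denoted by a little-endian list of bits. -/
def natOfBits (bs : List Bool) : ℕ :=
  bs.foldr (fun b acc => (if b then 1 else 0) + 2 * acc) 0

/-- The `n`-bit little-endian two's complement encoding of an integer. -/
def toBits (n : ℕ) (x : ℤ) : List Bool :=
  (List.range n).map (fun i => ((x % (2 ^ n : ℤ)).toNat).testBit i)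

/-- Decoding a little-endian bit list as a (signed or unsigned) integer;
for signed types values `≥ 2^(n-1)` are shifted down by `2^n`. -/
def ofBits (si : Bool) (bs : List Bool) : ℤ :=
  if si = true ∧ 2 ^ (bs.length - 1) ≤ natOfBits bs then
    (natOfBits bs : ℤ) - 2 ^ bs.length
  else (natOfBits bs : ℤ)

/-- The representable range of an `n`-bit integer type with signedness `si`. -/
def inRange (si : Bool) (n : ℕ) (x : ℤ) : Prop :=
  if si = true then -(2 ^ (n - 1) : ℤ) ≤ x ∧ x < 2 ^ (n - 1)
  else 0 ≤ x ∧ x < 2 ^ n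


/-! Reading bits as a natural number and `toBits n` are inverse bijections between `n`-bit lists
and residues mod `2 ^ n`, as one sees bit by bit through `Nat.testBit`. Decoding only shifts by a
multiple of `2 ^ n`, so both round trips hold modulo `2 ^ n`; since every representable range is a
half-open interval of length `2 ^ n`, congruence there forces equality. -/

theorem Int.eq_of_modEq_of_mem_Ico {m a x y : ℤ} (hx : x ∈ Set.Ico a (a + m))
    (hy : y ∈ Set.Ico a (a + m)) (h : x ≡ y [ZMOD m]) : x = y := by
  have reduce : ∀ z ∈ Set.Ico a (a + m), (z - a) % m = z - a := fun z hz =>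
    Int.emod_eq_of_lt (by linarith [hz.1]) (by linarith [hz.2])
  have : (x - a) % m = (y - a) % m := h.sub_right a
  linarith [reduce x hx, reduce y hy]

def rangeMin (si : Bool) (n : ℕ) : ℤ :=
  if si then -2 ^ (n - 1) else 0

theorem inRange_iff_mem_Ico {si : Bool} {n : ℕ} (hn : 1 ≤ n) {x : ℤ} :
    inRange si n x ↔ x ∈ Set.Ico (rangeMin si n) (rangeMin si n + 2 ^ n) := by
  have hpow : (2 : ℤ) ^ n = 2 * 2 ^ (n - 1) := by rw [← pow_succ', Nat.sub_add_cancel hn]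
  cases si <;> simp [inRange, rangeMin, hpow]
  omega

theorem eq_of_inRange_of_modEq {si : Bool} {n : ℕ} (hn : 1 ≤ n) {x y : ℤ}
    (hx : inRange si n x) (hy : inRange si n y) (h : x ≡ y [ZMOD 2 ^ n]) : x = y :=
  Int.eq_of_modEq_of_mem_Ico ((inRange_iff_mem_Ico hn).1 hx) ((inRange_iff_mem_Ico hn).1 hy) h

theorem natOfBits_cons (b : Bool) (bs : List Bool) :
    natOfBits (b :: bs) = (if b then 1 else 0) + 2 * natOfBits bs := rfl

theorem natOfBits_lt (bs : List Bool) : natOfBits bs < 2 ^ bs.length := by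
  induction bs with
  | nil => simp [natOfBits]
  | cons b bs ih =>
    rw [natOfBits_cons, List.length_cons, pow_succ]
    split <;> omega

theorem testBit_natOfBits (bs : List Bool) (i : ℕ) :
    (natOfBits bs).testBit i = bs.getD i false := by
  induction bs generalizing i with
  | nil => simp [natOfBits]
  | cons b bs ih =>
    cases i with
    | zero => cases b <;> simp [natOfBits_cons, Nat.testBit_zero]
    | succ i =>
      rw [natOfBits_cons, Nat.testBit_succ, List.getD_cons_succ, ← ih]
      congr 1
      split <;> omega

theorem length_toBits (n : ℕ) (x : ℤ) : (toBits n x).length = n := by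
  simp [toBits]

theorem natOfBits_toBits (n : ℕ) (x : ℤ) : (natOfBits (toBits n x) : ℤ) = x % 2 ^ n := by
  have hnonneg : 0 ≤ x % 2 ^ n := Int.emod_nonneg x (by positivity)
  have hlt : (x % 2 ^ n).toNat < 2 ^ n := by
    rw [Int.toNat_lt hnonneg]; exact_mod_cast Int.emod_lt_of_pos x (by positivity)
  suffices natOfBits (toBits n x) = (x % 2 ^ n).toNat by rw [this, Int.toNat_of_nonneg hnonneg]
  refine Nat.eq_of_testBit_eq fun i => ?_
  rw [testBit_natOfBits]
  by_cases hi : i < n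
  · simp [toBits, hi]
  · have hsmall : (x % 2 ^ n).toNat < 2 ^ i :=
      hlt.trans_le (Nat.pow_le_pow_right two_pos (not_lt.1 hi))
    simp [toBits, hi, Nat.testBit_eq_false_of_lt hsmall]

theorem toBits_congr {n : ℕ} {x y : ℤ} (h : x ≡ y [ZMOD 2 ^ n]) :
    toBits n x = toBits n y := by
  simp only [toBits, show x % 2 ^ n = y % 2 ^ n from h]

theorem toBits_natOfBits (bs : List Bool) : toBits bs.length (natOfBits bs) = bs := by
  have hmod : (natOfBits bs : ℤ) % 2 ^ bs.length = natOfBits bs :=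
    Int.emod_eq_of_lt (by positivity) (by exact_mod_cast natOfBits_lt bs)
  refine List.ext_getElem (length_toBits _ _) fun i _ hi => ?_
  simp [toBits, hmod, testBit_natOfBits, hi]

theorem ofBits_modEq (si : Bool) (bs : List Bool) :
    ofBits si bs ≡ natOfBits bs [ZMOD 2 ^ bs.length] := by
  unfold ofBits
  split_ifs
  · exact Int.sub_emod_right _ _
  · rfl

theorem inRange_ofBits (si : Bool) {bs : List Bool} (h : bs ≠ []) :
    inRange si bs.length (ofBits si bs) := by
  have hlen : 1 ≤ bs.length := List.length_pos_iff.2 h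
  have hlt : (natOfBits bs : ℤ) < 2 ^ bs.length := by exact_mod_cast natOfBits_lt bs
  have hpow : (2 : ℤ) ^ bs.length = 2 * 2 ^ (bs.length - 1) := by
    rw [← pow_succ', Nat.sub_add_cancel hlen]
  have hhalf : 2 ^ (bs.length - 1) ≤ natOfBits bs ↔
      (2 : ℤ) ^ (bs.length - 1) ≤ natOfBits bs := by
    exact_mod_cast Iff.rfl
  rw [inRange_iff_mem_Ico hlen]
  unfold ofBits rangeMin
  cases si <;> simp only [hhalf] <;> split_ifs <;> simp_all <;> omega

/-- The little-endian two's complement integer encoding functions are mutually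
inverse, for bit width `n = charbits * ranksize k` with `charbits ≥ 8` and
`ranksize k ≥ 1`. -/
theorem int_encode_decode_inverse (charbits ranksize : ℕ)
    (hc : 8 ≤ charbits) (hr : 1 ≤ ranksize) (si : Bool) :
    (∀ x : ℤ, inRange si (charbits * ranksize) x →
      ofBits si (toBits (charbits * ranksize) x) = x ∧
      (toBits (charbits * ranksize) x).length = charbits * ranksize) ∧
    (∀ β : List Bool, β.length = charbits * ranksize →
      toBits (charbits * ranksize) (ofBits si β) = β ∧
      inRange si (charbits * ranksize) (ofBits si β)) := by
  have hn : 1 ≤ charbits * ranksize := Nat.mul_le_mul (by omega : 1 ≤ charbits) hr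
  refine ⟨fun x hx => ⟨?_, length_toBits _ x⟩, fun β hβ => ?_⟩
  · have hne : toBits (charbits * ranksize) x ≠ [] :=
      List.ne_nil_of_length_pos (by rw [length_toBits]; omega)
    have hdecoded := inRange_ofBits si hne
    have hmod := ofBits_modEq si (toBits (charbits * ranksize) x)
    rw [length_toBits] at hdecoded hmod
    refine eq_of_inRange_of_modEq hn hdecoded hx (hmod.trans ?_)
    rw [natOfBits_toBits]
    exact Int.mod_modEq x _
  · have hne : β ≠ [] := List.ne_nil_of_length_pos (by omega)
    rw [← hβ]
    exact ⟨(toBits_congr (ofBits_modEq si β)).trans (toBits_natOfBits β),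
      inRange_ofBits si hne⟩
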